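/- Let A be a formally real integral domain which is an ℝ-algebra. Let I₀, M₀ be ℝ-linearly independent imaginary units with a, b, K₀ as in Notation 5.1, and let f, h ∈ Quaternion A \ {0} be such that f * h is I₀-sliced but not scalar and h * f is M₀-sliced but not scalar. Then there exist ε ∈ {1, −1} and nonzero I₀-sliced elements f̃, h̃ ∈ Quaternion A with f = f̃ * (1 + ((a + ε)/b)·ι(K₀)) and h = (1 − ((a + ε)/b)·ι(K₀)) * h̃. (Theorem 6.1, case (ii).) -/

import Mathlib

/-!
Put `P = ι(I₀)` and `Q = ι(J₀)`, so that `ι(K₀) = PQ` and `ι(M₀) = aP + bQ`. The slice `A + AP`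
is a copy of `A[i]`, every quaternion is uniquely `x + yQ` with `x, y` in the slice, and `Qz = z̄Q`
there. For `f = x + yQ`, `h = u + vQ` and `h * f = c + d·ι(M₀)` (so `d ≠ 0`), the hypotheses read
`xv + yū = 0`, `uy + vx̄ = db` and `Im(ux - vȳ) = da`. Eliminating gives `2p·y = -db·xi` and
`2p·v = db·ūi` with `p = Im(ux)`; substituting back yields `4p² - 4pda - d²b² = 0`, i.e.
`2p = d(a - ε)` with `ε = ±1` because `a² + b² = 1`. Hence `y = ((a + ε)/b)·xi` and
`v = -((a + ε)/b)·iū`, which are the two factorizations. Formal reality makes `A[i]` a domain,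
which rules out `p = 0`.
-/

open Quaternion

/-- The componentwise extension `ι : ℍ[ℝ] → ℍ[A]` of `algebraMap ℝ A`. -/
noncomputable def qmap {A : Type*} [CommRing A] [Algebra ℝ A] (q : Quaternion ℝ) :
    Quaternion A :=
  ⟨algebraMap ℝ A q.re, algebraMap ℝ A q.imI, algebraMap ℝ A q.imJ, algebraMap ℝ A q.imK⟩

/-- An imaginary unit: a real quaternion with zero real part squaring to `-1`. -/
def IsImaginaryUnit (I : Quaternion ℝ) : Prop := I.re = 0 ∧ I ^ 2 = -1

/-- `q` is `I`-sliced if `q = a + b·ι(I)` for some `a, b ∈ A`. -/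
noncomputable def IsSliced {A : Type*} [CommRing A] [Algebra ℝ A]
    (I : Quaternion ℝ) (q : Quaternion A) : Prop :=
  ∃ a b : A, q = (a : Quaternion A) + (b : Quaternion A) * qmap I

/-- `q` is scalar if its vector part vanishes. -/
def IsScalarQ {A : Type*} [CommRing A] (q : Quaternion A) : Prop := q.im = 0

/-- `A` is formally real: a sum of four squares vanishes only trivially. -/
def FormallyRealFour (A : Type*) [CommRing A] : Prop :=
  ∀ a b c d : A, a ^ 2 + b ^ 2 + c ^ 2 + d ^ 2 = 0 → a = 0 ∧ b = 0 ∧ c = 0 ∧ d = 0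

open scoped QuadraticAlgebra

/-- `A[i]`; through `sliceHom P` it is the slice `A + A P` of `ℍ[A]`. -/
abbrev GaussianRing (A : Type*) [CommRing A] := QuadraticAlgebra A (-1) 0

section StarRelations

/-! For `f = x + yQ` and `h = u + vQ`, `h₁` and `h₂` say that the `Q`-components of `f * h` and
`h * f` are `0` and `δ` (see `sliceHom_add_mul`). -/

variable {R : Type*} [CommRing R] [StarRing R] {x y u v δ : R}

theorem mul_sub_star_eq_mul_of_relations (h₁ : x * v + y * star u = 0)
    (h₂ : u * y + v * star x = δ) :
    y * (u * x - star (u * x)) = δ * x := by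
  rw [star_mul']; linear_combination x * h₂ - star x * h₁

theorem mul_sub_star_eq_neg_mul_star_of_relations (h₁ : x * v + y * star u = 0)
    (h₂ : u * y + v * star x = δ) :
    v * (u * x - star (u * x)) = -(δ * star u) := by
  rw [star_mul']; linear_combination u * h₁ - star u * h₂

theorem sub_star_sq_mul_of_relations (h₁ : x * v + y * star u = 0)
    (h₂ : u * y + v * star x = δ) :
    (u * x - star (u * x)) ^ 2 * (u * x - v * star y) =
      (u * x - star (u * x)) ^ 2 * (u * x) - δ * star δ * star (u * x) := by
  have hy := congrArg star (mul_sub_star_eq_mul_of_relations h₁ h₂)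
  have hv := mul_sub_star_eq_neg_mul_star_of_relations h₁ h₂
  simp only [star_mul', star_sub, star_star] at hy
  rw [star_mul'] at hv ⊢
  linear_combination (-(star y * (u * x - star u * star x))) * hv - δ * star u * hy

end StarRelations

theorem exists_sign_of_quadratic {A : Type*} [CommRing A] [IsDomain A] [Algebra ℝ A] {a b : ℝ}
    (hb : b ≠ 0) (hab : a ^ 2 + b ^ 2 = 1) {p d : A}
    (h : 4 * p ^ 2 - 4 * p * (d * algebraMap ℝ A a) - (d * algebraMap ℝ A b) ^ 2 = 0) :
    ∃ ε : ℝ, (ε = 1 ∨ ε = -1) ∧ 2 * p * algebraMap ℝ A ((a + ε) / b) = -(d * algebraMap ℝ A b) := by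
  have hab' : algebraMap ℝ A a ^ 2 + algebraMap ℝ A b ^ 2 = 1 := by
    simpa using congrArg (algebraMap ℝ A) hab
  have hb' : algebraMap ℝ A b ≠ 0 := (map_ne_zero _).mpr hb
  -- `(2p - d a)² = d² (a² + b²) = d²`
  have hfac : (2 * p - d * algebraMap ℝ A a - d) * (2 * p - d * algebraMap ℝ A a + d) = 0 := by
    linear_combination h + d ^ 2 * hab'
  have hsign : ∀ ε : ℝ, ε ^ 2 = 1 → 2 * p = d * (algebraMap ℝ A a - algebraMap ℝ A ε) →
      2 * p * algebraMap ℝ A ((a + ε) / b) = -(d * algebraMap ℝ A b) := fun ε hε hp ↦ by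
    refine mul_right_cancel₀ hb' ?_
    rw [mul_assoc, ← map_mul, div_mul_cancel₀ _ hb, hp]
    have hε' : algebraMap ℝ A ε ^ 2 = 1 := by simpa using congrArg (algebraMap ℝ A) hε
    simp only [map_add]
    linear_combination d * hab' - d * hε'
  rcases mul_eq_zero.mp hfac with h1 | h1
  · refine ⟨-1, Or.inr rfl, hsign _ (by norm_num) ?_⟩
    simp only [map_neg, map_one]; linear_combination h1
  · refine ⟨1, Or.inl rfl, hsign _ (by norm_num) ?_⟩
    simp only [map_one]; linear_combination h1

namespace GaussianRing

variable {A : Type*} [CommRing A]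

theorem omega_mul_omega : (ω : GaussianRing A) * ω = -1 := by
  ext <;> simp

theorem sub_star_eq (z : GaussianRing A) : z - star z = (2 * z.im) • ω := by
  ext <;> simp [two_mul]

theorem noZeroDivisors [IsDomain A] (hFR : FormallyRealFour A) :
    NoZeroDivisors (GaussianRing A) := by
  have eq_zero_of_norm : ∀ z : GaussianRing A, z.norm = 0 → z = 0 := fun z hz ↦ by
    obtain ⟨hre, him, -, -⟩ := hFR z.re z.im 0 0 (by
      rw [QuadraticAlgebra.norm_def] at hz; linear_combination hz)
    ext <;> simp [hre, him]
  refine ⟨fun {z w} hzw ↦ ?_⟩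
  have := congrArg QuadraticAlgebra.norm hzw
  rw [map_mul, QuadraticAlgebra.norm_zero] at this
  exact (mul_eq_zero.mp this).imp (eq_zero_of_norm z) (eq_zero_of_norm w)

section Relations

variable {x y u v : GaussianRing A} {δ : A}

theorem im_mul_quadratic_of_relations (h₁ : x * v + y * star u = 0)
    (h₂ : u * y + v * star x = algebraMap A _ δ) :
    (u * x).im * (4 * (u * x).im ^ 2 - 4 * (u * x).im * (u * x - v * star y).im - δ ^ 2) = 0 := by
  have h := congrArg QuadraticAlgebra.im (sub_star_sq_mul_of_relations h₁ h₂)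
  generalize u * x = z, u * x - v * star y = w at h ⊢
  rw [sub_star_eq] at h
  simp only [pow_two, Algebra.mul_smul_comm, Algebra.smul_mul_assoc, QuadraticAlgebra.im_smul,
    QuadraticAlgebra.im_mul, QuadraticAlgebra.re_mul, QuadraticAlgebra.omega_re, mul_zero,
    QuadraticAlgebra.omega_im, mul_one, zero_add, neg_mul, one_mul, add_zero, zero_mul, smul_eq_mul,
    mul_neg, QuadraticAlgebra.im_sub, QuadraticAlgebra.algebraMap_re, QuadraticAlgebra.re_star,
    QuadraticAlgebra.algebraMap_im, QuadraticAlgebra.im_star, neg_zero, sub_neg_eq_add] at h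
  linear_combination h

theorem im_mul_ne_zero_of_relations [IsDomain A] (hFR : FormallyRealFour A) (hδ : δ ≠ 0)
    (h₁ : x * v + y * star u = 0) (h₂ : u * y + v * star x = algebraMap A _ δ) :
    (u * x).im ≠ 0 := by
  have := noZeroDivisors hFR
  have hδ' : algebraMap A (GaussianRing A) δ ≠ 0 := by simpa using hδ
  intro hp
  have hx : x = 0 := by
    have h := mul_sub_star_eq_mul_of_relations h₁ h₂
    rw [sub_star_eq, hp, mul_zero, zero_smul, mul_zero, eq_comm] at h
    exact (mul_eq_zero.mp h).resolve_left hδ'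
  rw [hx, zero_mul, zero_add] at h₁
  rw [hx, star_zero, mul_zero, add_zero] at h₂
  rcases mul_eq_zero.mp h₁ with hy | hu
  · exact hδ' (by rw [← h₂, hy, mul_zero])
  · exact hδ' (by rw [← h₂, star_eq_zero.mp hu, zero_mul])

theorem exists_sign_of_relations [IsDomain A] [Algebra ℝ A] (hFR : FormallyRealFour A) {a b : ℝ}
    (hb : b ≠ 0) (hab : a ^ 2 + b ^ 2 = 1) {d : A} (hd : d ≠ 0)
    (h₁ : x * v + y * star u = 0)
    (h₂ : u * y + v * star x = algebraMap A _ (d * algebraMap ℝ A b))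
    (h₃ : (u * x - v * star y).im = d * algebraMap ℝ A a) :
    ∃ ε : ℝ, (ε = 1 ∨ ε = -1) ∧ x ≠ 0 ∧ u ≠ 0 ∧
      y = ((a + ε) / b) • (x * ω) ∧ v = -(((a + ε) / b) • (ω * star u)) := by
  have := noZeroDivisors hFR
  have hδ : d * algebraMap ℝ A b ≠ 0 := mul_ne_zero hd ((map_ne_zero _).mpr hb)
  set p := (u * x).im
  have hp : p ≠ 0 := im_mul_ne_zero_of_relations hFR hδ h₁ h₂
  have hquad := im_mul_quadratic_of_relations h₁ h₂
  rw [h₃] at hquad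
  obtain ⟨ε, hε, hΛ⟩ := exists_sign_of_quadratic hb hab ((mul_eq_zero.mp hquad).resolve_left hp)
  have h2 : (2 : A) ≠ 0 := by
    simpa only [map_ofNat] using (map_ne_zero (algebraMap ℝ A)).mpr (two_ne_zero (α := ℝ))
  have h2p : algebraMap A (GaussianRing A) (2 * p) ≠ 0 :=
    (map_ne_zero_iff _ QuadraticAlgebra.algebraMap_injective).mpr (mul_ne_zero h2 hp)
  have hΛ' := congrArg (algebraMap A (GaussianRing A)) hΛ
  have hy := mul_sub_star_eq_mul_of_relations h₁ h₂
  have hv := mul_sub_star_eq_neg_mul_star_of_relations h₁ h₂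
  rw [sub_star_eq, Algebra.smul_def] at hy hv
  refine ⟨ε, hε, fun hx ↦ hp (by simp [p, hx]), fun hu ↦ hp (by simp [p, hu]), ?_, ?_⟩ <;>
    rw [Algebra.smul_def, IsScalarTower.algebraMap_apply ℝ A] <;>
    refine mul_left_cancel₀ h2p ?_ <;>
    simp only [map_mul, map_neg, map_ofNat] at hΛ' hy hv ⊢
  · linear_combination (-ω) * hy + 2 * y * algebraMap A _ p * omega_mul_omega (A := A) -
      x * ω * hΛ'
  · linear_combination (-ω) * hv + 2 * v * algebraMap A _ p * omega_mul_omega (A := A) +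
      ω * star u * hΛ'

end Relations

end GaussianRing

section Slice

variable {A : Type*} [CommRing A] {P Q : ℍ[A]}

noncomputable def sliceHom (P : ℍ[A]) (hP : P * P = -1) : GaussianRing A →ₐ[A] ℍ[A] :=
  QuadraticAlgebra.lift ⟨P, by simp [hP]⟩

theorem sliceHom_apply (hP : P * P = -1) (z : GaussianRing A) :
    sliceHom P hP z = (z.re : ℍ[A]) + (z.im : ℍ[A]) * P := by
  simp only [sliceHom, QuadraticAlgebra.lift_apply_apply, ← coe_mul_eq_smul, mul_one]

theorem sliceHom_omega (hP : P * P = -1) : sliceHom P hP ω = P := by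
  simp [sliceHom_apply]

theorem commute_sliceHom (hP : P * P = -1) (z : GaussianRing A) : Commute P (sliceHom P hP z) := by
  simpa only [sliceHom_omega] using (Commute.all ω z).map (sliceHom P hP)

theorem sliceHom_injective (hP0 : P.re = 0) (hP : P * P = -1) :
    Function.Injective (sliceHom P hP) := by
  refine (injective_iff_map_eq_zero _).mpr fun z hz ↦ ?_
  have hre := congrArg QuaternionAlgebra.re hz
  have him := congrArg (fun q ↦ (P * q).re) hz
  simp only [sliceHom_apply, mul_add, ← mul_assoc, ← coe_commutes _ P, mul_assoc _ P, hP] at hre him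
  ext
  · simpa [hP0] using hre
  · simpa [hP0] using him

theorem mul_sliceHom (hP : P * P = -1) (hPQ : P * Q = -(Q * P)) (z : GaussianRing A) :
    Q * sliceHom P hP z = sliceHom P hP (star z) * Q := by
  have hQP : Q * P = -(P * Q) := by rw [hPQ, neg_neg]
  simp only [sliceHom_apply, QuadraticAlgebra.re_star, QuadraticAlgebra.im_star,
    coe_neg, mul_add, add_mul, ← mul_assoc Q, ← coe_commutes _ Q]
  rw [mul_assoc _ Q, hQP]
  noncomm_ring

theorem sliceHom_add_mul (hP : P * P = -1) (hQ : Q * Q = -1) (hPQ : P * Q = -(Q * P))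
    (x y u v : GaussianRing A) :
    (sliceHom P hP x + sliceHom P hP y * Q) * (sliceHom P hP u + sliceHom P hP v * Q) =
      sliceHom P hP (x * u - y * star v) + sliceHom P hP (x * v + y * star u) * Q := by
  have hv : Q * (sliceHom P hP v * Q) = - sliceHom P hP (star v) := by
    rw [← mul_assoc, mul_sliceHom hP hPQ, mul_assoc, hQ, mul_neg_one]
  simp only [add_mul, mul_add, map_add, map_sub, map_mul, mul_assoc, mul_sliceHom hP hPQ, hv]
  noncomm_ring

theorem eq_zero_of_sliceHom_add_mul_eq_zero (h2 : IsUnit (2 : A)) (hP0 : P.re = 0)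
    (hP : P * P = -1) (hQ : Q * Q = -1) (hPQ : P * Q = -(Q * P)) {z w : GaussianRing A}
    (h : sliceHom P hP z + sliceHom P hP w * Q = 0) : z = 0 ∧ w = 0 := by
  set X := sliceHom P hP z
  set W := sliceHom P hP w
  have hX : X = -(W * Q) := eq_neg_of_add_eq_zero_left h
  -- `X` commutes with `P`, while `W * Q` anticommutes with it
  have hXP : (2 : ℍ[A]) * (X * P) = 0 := by
    have hc : P * X = X * P := commute_sliceHom hP z
    have ha : P * X = -(X * P) := by
      rw [hX, mul_neg, neg_mul, neg_neg, ← mul_assoc, (commute_sliceHom hP w).eq, mul_assoc,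
        hPQ, mul_neg, mul_assoc, neg_neg]
    rw [two_mul]; nth_rewrite 1 [← hc]; rw [ha, neg_add_cancel]
  have h2' : IsUnit (2 : ℍ[A]) := by simpa only [map_ofNat] using h2.map (algebraMap A ℍ[A])
  have hX0 : X = 0 := calc
    X = -(X * P * P) := by rw [mul_assoc, hP]; noncomm_ring
    _ = 0 := by rw [h2'.mul_right_eq_zero.mp hXP, zero_mul, neg_zero]
  have hW0 : W = 0 := calc
    W = -(W * Q * Q) := by rw [mul_assoc, hQ]; noncomm_ring
    _ = 0 := by rw [neg_eq_zero.mp (hX.symm.trans hX0), zero_mul, neg_zero]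
  exact ⟨(map_eq_zero_iff _ (sliceHom_injective hP0 hP)).mp hX0,
    (map_eq_zero_iff _ (sliceHom_injective hP0 hP)).mp hW0⟩

theorem exists_sliceHom_eq_of_commute (h2 : IsUnit (2 : A)) (hP0 : P.re = 0)
    (hP : P * P = -1) {q : ℍ[A]} (hq : P * q = q * P) : ∃ z, sliceHom P hP z = q := by
  refine ⟨⟨q.re, -(P * q).re⟩, ?_⟩
  have hn := congrArg QuaternionAlgebra.re hP
  have cI := congrArg QuaternionAlgebra.imI hq
  have cJ := congrArg QuaternionAlgebra.imJ hq
  have cK := congrArg QuaternionAlgebra.imK hq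
  simp only [re_mul, imI_mul, imJ_mul, imK_mul, hP0, zero_mul, mul_zero, zero_add, zero_sub,
    re_neg, re_one] at hn cI cJ cK
  rw [sliceHom_apply]
  ext <;> simp only [re_add, imI_add, imJ_add, imK_add, re_coe, imI_coe, imJ_coe, imK_coe,
    re_mul, imI_mul, imJ_mul, imK_mul, hP0]
  · ring
  -- `q - (P·q) P` is the double cross product `P × (q × P)`, and `q × P = 0`
  all_goals refine h2.mul_left_cancel ?_
  · linear_combination -2 * q.imI * hn + P.imJ * cK - P.imK * cJ
  · linear_combination -2 * q.imJ * hn - P.imI * cK + P.imK * cI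
  · linear_combination -2 * q.imK * hn + P.imI * cJ - P.imJ * cI

theorem exists_eq_sliceHom_add_sliceHom_mul (h2 : IsUnit (2 : A)) (hP0 : P.re = 0)
    (hP : P * P = -1) (hQ : Q * Q = -1) (hPQ : P * Q = -(Q * P)) (q : ℍ[A]) :
    ∃ z w, q = sliceHom P hP z + sliceHom P hP w * Q := by
  have hPP : ∀ X : ℍ[A], X * P * P = -X := fun X ↦ by rw [mul_assoc, hP, mul_neg_one]
  have hQQ : ∀ X : ℍ[A], X * Q * Q = -X := fun X ↦ by rw [mul_assoc, hQ, mul_neg_one]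
  have hQP : ∀ X : ℍ[A], X * Q * P = -(X * P * Q) := fun X ↦ by
    rw [mul_assoc, mul_assoc, hPQ, mul_neg, neg_neg]
  -- `q = ½ (q - P q P) + ½ (q + P q P)`, and `P` commutes with `q - P q P` and with `(q + P q P) Q`
  obtain ⟨z, hz⟩ := exists_sliceHom_eq_of_commute h2 hP0 hP (q := q - P * q * P) (by
    simp only [mul_sub, sub_mul, ← mul_assoc, hP, hPP]; noncomm_ring)
  obtain ⟨w, hw⟩ := exists_sliceHom_eq_of_commute h2 hP0 hP (q := -((q + P * q * P) * Q)) (by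
    simp only [mul_add, add_mul, mul_neg, neg_mul, ← mul_assoc, hP, hQP, hPP]; noncomm_ring)
  obtain ⟨c, hc⟩ := h2.exists_right_inv
  refine ⟨c • z, c • w, ?_⟩
  rw [map_smul, map_smul, hz, hw, smul_mul_assoc, ← smul_add, neg_mul, hQQ, neg_neg,
    sub_add_add_cancel, ← two_smul A, smul_smul, mul_comm, hc, one_smul]

theorem sliceHom_add_mul_inj (h2 : IsUnit (2 : A)) (hP0 : P.re = 0) (hP : P * P = -1)
    (hQ : Q * Q = -1) (hPQ : P * Q = -(Q * P)) {z w z' w' : GaussianRing A}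
    (h : sliceHom P hP z + sliceHom P hP w * Q = sliceHom P hP z' + sliceHom P hP w' * Q) :
    z = z' ∧ w = w' := by
  have h0 := eq_zero_of_sliceHom_add_mul_eq_zero h2 hP0 hP hQ hPQ (z := z - z') (w := w - w') (by
    rw [map_sub, map_sub, sub_mul, ← sub_eq_zero.mpr h]; abel)
  exact ⟨sub_eq_zero.mp h0.1, sub_eq_zero.mp h0.2⟩

end Slice

section Factorization

variable {A : Type*} [CommRing A] [Algebra ℝ A] {P Q : ℍ[A]}

theorem sliceHom_add_sliceHom_smul_mul (hP : P * P = -1) (r : ℝ) (x : GaussianRing A) :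
    sliceHom P hP x + sliceHom P hP (r • (x * ω)) * Q = sliceHom P hP x * (1 + r • (P * Q)) := by
  rw [AlgHom.map_smul_of_tower, map_mul, sliceHom_omega, mul_add, mul_one, mul_smul_comm,
    smul_mul_assoc, mul_assoc]

theorem sliceHom_add_sliceHom_neg_smul_mul (hP : P * P = -1) (hPQ : P * Q = -(Q * P)) (r : ℝ)
    (u : GaussianRing A) :
    sliceHom P hP u + sliceHom P hP (-(r • (ω * star u))) * Q =
      (1 - r • (P * Q)) * sliceHom P hP u := by
  rw [map_neg, AlgHom.map_smul_of_tower, map_mul, sliceHom_omega, neg_mul, smul_mul_assoc,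
    mul_assoc, ← star_star u, ← mul_sliceHom hP hPQ, star_star, sub_mul, one_mul, smul_mul_assoc,
    mul_assoc, sub_eq_add_neg]

end Factorization

theorem exists_factorization_of_sliced_products {A : Type*} [CommRing A] [IsDomain A]
    [Algebra ℝ A] (hFR : FormallyRealFour A) {P Q : ℍ[A]} (hP0 : P.re = 0) (hP : P * P = -1)
    (hQ : Q * Q = -1) (hPQ : P * Q = -(Q * P)) {a b : ℝ} (hb : b ≠ 0) (hab : a ^ 2 + b ^ 2 = 1)
    {f h : ℍ[A]} (hfh : ∃ s t : A, f * h = s + t * P)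
    (hhf : ∃ c d : A, h * f = c + d * (a • P + b • Q)) (hhf' : ¬ IsScalarQ (h * f)) :
    ∃ ε : ℝ, (ε = 1 ∨ ε = -1) ∧ ∃ x u : GaussianRing A, x ≠ 0 ∧ u ≠ 0 ∧
      f = sliceHom P hP x * (1 + ((a + ε) / b) • (P * Q)) ∧
      h = (1 - ((a + ε) / b) • (P * Q)) * sliceHom P hP u := by
  have h2 : IsUnit (2 : A) := by
    simpa only [map_ofNat] using (IsUnit.mk0 (2 : ℝ) two_ne_zero).map (algebraMap ℝ A)
  obtain ⟨x, y, rfl⟩ := exists_eq_sliceHom_add_sliceHom_mul h2 hP0 hP hQ hPQ f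
  obtain ⟨u, v, rfl⟩ := exists_eq_sliceHom_add_sliceHom_mul h2 hP0 hP hQ hPQ h
  obtain ⟨s, t, hst⟩ := hfh
  obtain ⟨c, d, hcd⟩ := hhf
  have hd : d ≠ 0 := by
    rintro rfl
    exact hhf' (by simp [IsScalarQ, hcd])
  have hst' : (s : ℍ[A]) + t * P = sliceHom P hP ⟨s, t⟩ + sliceHom P hP 0 * Q := by
    simp [sliceHom_apply]
  have hcd' : (c : ℍ[A]) + d * (a • P + b • Q) = sliceHom P hP ⟨c, d * algebraMap ℝ A a⟩ +
      sliceHom P hP (algebraMap A _ (d * algebraMap ℝ A b)) * Q := by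
    simp only [sliceHom_apply, ← algebraMap_smul A a P, ← algebraMap_smul A b Q,
      ← coe_mul_eq_smul, coe_mul]
    simp only [map_mul, QuadraticAlgebra.re_mul, QuadraticAlgebra.algebraMap_re,
      QuadraticAlgebra.algebraMap_im, mul_zero, add_zero, coe_mul, QuadraticAlgebra.im_mul,
      zero_mul, coe_zero]
    noncomm_ring
  rw [sliceHom_add_mul hP hQ hPQ, hst'] at hst
  rw [sliceHom_add_mul hP hQ hPQ, hcd'] at hcd
  obtain ⟨-, h₁⟩ := sliceHom_add_mul_inj h2 hP0 hP hQ hPQ hst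
  obtain ⟨h₃, h₂⟩ := sliceHom_add_mul_inj h2 hP0 hP hQ hPQ hcd
  obtain ⟨ε, hε, hx, hu, rfl, rfl⟩ := GaussianRing.exists_sign_of_relations hFR hb hab hd h₁ h₂
    (by rw [h₃])
  exact ⟨ε, hε, x, u, hx, hu, sliceHom_add_sliceHom_smul_mul hP _ x,
    sliceHom_add_sliceHom_neg_smul_mul hP hPQ _ u⟩

section Frame

/-! With `IM + MI = -2a` and `b = √(1 - a²)`, `J := b⁻¹ • (M - a • I)` and `K := b⁻¹ • (IM + a)` are
the `J₀` and `K₀` of Notation 5.1. -/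

variable {R : Type*} [Ring R] [Algebra ℝ R] {I M : R} {a b : ℝ}

theorem frame_K_eq (hIM : I * M + M * I = (-2 * a) • 1) :
    (2 * b)⁻¹ • (I * M - M * I) = b⁻¹ • (I * M + a • 1) := by
  rw [eq_sub_of_add_eq' hIM]
  module

theorem frame_K_mul (hI : I * I = -1) (hIM : I * M + M * I = (-2 * a) • 1) :
    b⁻¹ • (I * M + a • 1) * I = b⁻¹ • (M - a • I) := by
  have hMI : M * I = (-2 * a) • 1 - I * M := eq_sub_of_add_eq' hIM
  rw [smul_mul_assoc, add_mul, mul_assoc, hMI, mul_sub, mul_smul_comm, ← mul_assoc, hI, mul_one,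
    smul_mul_assoc, one_mul, neg_one_mul]
  module

theorem frame_mul_J (hI : I * I = -1) : I * (b⁻¹ • (M - a • I)) = b⁻¹ • (I * M + a • 1) := by
  rw [mul_smul_comm, mul_sub, mul_smul_comm, hI]
  module

theorem frame_J_mul (hI : I * I = -1) (hIM : I * M + M * I = (-2 * a) • 1) :
    b⁻¹ • (M - a • I) * I = -(I * (b⁻¹ • (M - a • I))) := by
  have hMI : M * I = (-2 * a) • 1 - I * M := eq_sub_of_add_eq' hIM
  rw [smul_mul_assoc, mul_smul_comm, sub_mul, mul_sub, smul_mul_assoc, mul_smul_comm, hI, hMI]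
  module

theorem frame_J_mul_J (hI : I * I = -1) (hM : M * M = -1) (hIM : I * M + M * I = (-2 * a) • 1)
    (hb : b ≠ 0) (hab : a ^ 2 + b ^ 2 = 1) :
    b⁻¹ • (M - a • I) * (b⁻¹ • (M - a • I)) = -1 := by
  have hMI : M * I = (-2 * a) • 1 - I * M := eq_sub_of_add_eq' hIM
  simp only [sub_mul, mul_sub, smul_mul_assoc, mul_smul_comm, hI, hM, hMI]
  have hb2 : b⁻¹ * b⁻¹ * (a * a - 1) = -1 := by field_simp; linear_combination hab
  linear_combination (norm := module) hb2 • (1 : R)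

end Frame

theorem Quaternion.mul_add_mul_swap_of_re_eq_zero {R : Type*} [CommRing R] {p q : ℍ[R]}
    (hp : p.re = 0) (hq : q.re = 0) :
    p * q + q * p = (-2 * (p.imI * q.imI + p.imJ * q.imJ + p.imK * q.imK)) • 1 := by
  ext <;> simp [hp, hq] <;> ring

theorem IsImaginaryUnit.norm_eq_one {I : ℍ[ℝ]} (hI : IsImaginaryUnit I) : ‖I‖ = 1 := by
  have hn : ‖I‖ * ‖I‖ = 1 := by
    rw [← normSq_eq_norm_mul_self, ← coe_inj (R := ℝ), ← self_mul_star, star_eq_neg.mpr hI.1,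
      mul_neg, ← pow_two, hI.2, neg_neg, coe_one]
  nlinarith [norm_nonneg I]

theorem sq_dot_lt_one_of_linearIndependent {I M : ℍ[ℝ]} (hI : IsImaginaryUnit I)
    (hM : IsImaginaryUnit M) (hind : LinearIndependent ℝ ![I, M]) :
    (I.imI * M.imI + I.imJ * M.imJ + I.imK * M.imK) ^ 2 < 1 := by
  have hinner : inner ℝ I M = I.imI * M.imI + I.imJ * M.imJ + I.imK * M.imK := by
    simp [Quaternion.inner_def, hI.1, hM.1]
  rw [sq_lt_one_iff_abs_lt_one, ← hinner]
  refine lt_of_le_of_ne ?_ fun h ↦ ?_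
  · simpa [hI.norm_eq_one, hM.norm_eq_one] using abs_real_inner_le_norm I M
  · obtain ⟨-, r, -, hr⟩ := (abs_real_inner_div_norm_mul_norm_eq_one_iff I M).mp
      (by simpa [hI.norm_eq_one, hM.norm_eq_one] using h)
    have := (LinearIndependent.pair_iff.mp hind) r (-1) (by rw [hr]; module)
    norm_num at this

section QMap

variable {A : Type*} [CommRing A] [Algebra ℝ A]

@[simp] theorem qmap_re (q : ℍ[ℝ]) : (qmap q : ℍ[A]).re = algebraMap ℝ A q.re := rfl
@[simp] theorem qmap_imI (q : ℍ[ℝ]) : (qmap q : ℍ[A]).imI = algebraMap ℝ A q.imI := rfl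
@[simp] theorem qmap_imJ (q : ℍ[ℝ]) : (qmap q : ℍ[A]).imJ = algebraMap ℝ A q.imJ := rfl
@[simp] theorem qmap_imK (q : ℍ[ℝ]) : (qmap q : ℍ[A]).imK = algebraMap ℝ A q.imK := rfl

variable (A) in
noncomputable def qmapAlgHom : ℍ[ℝ] →ₐ[ℝ] ℍ[A] where
  toFun := qmap
  map_one' := by ext <;> simp
  map_mul' _ _ := by ext <;> simp
  map_zero' := by ext <;> simp
  map_add' _ _ := by ext <;> simp
  commutes' _ := by
    ext <;> simp [Quaternion.algebraMap_def, IsScalarTower.algebraMap_apply ℝ A ℍ[A]]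

theorem qmapAlgHom_apply (q : ℍ[ℝ]) : qmapAlgHom A q = qmap q := rfl

theorem qmap_mul (p q : ℍ[ℝ]) : (qmap (p * q) : ℍ[A]) = qmap p * qmap q :=
  map_mul (qmapAlgHom A) p q

end QMap

theorem orthonormal_frame_relations {I₀ M₀ J₀ K₀ : ℍ[ℝ]} {a b : ℝ} (hI₀ : IsImaginaryUnit I₀)
    (hM₀ : IsImaginaryUnit M₀) (hind : LinearIndependent ℝ ![I₀, M₀])
    (ha : a = I₀.imI * M₀.imI + I₀.imJ * M₀.imJ + I₀.imK * M₀.imK)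
    (hb : b = Real.sqrt (1 - a ^ 2)) (hK₀ : K₀ = (2 * b)⁻¹ • (I₀ * M₀ - M₀ * I₀))
    (hJ₀ : J₀ = K₀ * I₀) :
    b ≠ 0 ∧ a ^ 2 + b ^ 2 = 1 ∧ I₀ * I₀ = -1 ∧ J₀ * J₀ = -1 ∧ I₀ * J₀ = -(J₀ * I₀) ∧
      K₀ = I₀ * J₀ ∧ M₀ = a • I₀ + b • J₀ := by
  have hI : I₀ * I₀ = -1 := by rw [← pow_two, hI₀.2]
  have hM : M₀ * M₀ = -1 := by rw [← pow_two, hM₀.2]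
  have hIM := Quaternion.mul_add_mul_swap_of_re_eq_zero hI₀.1 hM₀.1
  rw [← ha] at hIM
  have ha1 : a ^ 2 < 1 := ha ▸ sq_dot_lt_one_of_linearIndependent hI₀ hM₀ hind
  have hb0 : b ≠ 0 := (hb ▸ Real.sqrt_pos.mpr (by linarith) : 0 < b).ne'
  have hab : a ^ 2 + b ^ 2 = 1 := by rw [hb, Real.sq_sqrt (by linarith)]; ring
  have hJ : J₀ = b⁻¹ • (M₀ - a • I₀) := by rw [hJ₀, hK₀, frame_K_eq hIM, frame_K_mul hI hIM]
  refine ⟨hb0, hab, hI, hJ ▸ frame_J_mul_J hI hM hIM hb0 hab, ?_, ?_, ?_⟩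
  · rw [hJ, frame_J_mul hI hIM, neg_neg]
  · rw [hJ, frame_mul_J hI, hK₀, frame_K_eq hIM]
  · rw [hJ, smul_smul, mul_inv_cancel₀ hb0, one_smul]; abel

theorem two_sided_products_sliced_case_distinct_slices_general
    {A : Type*} [CommRing A] [IsDomain A] [Algebra ℝ A] (hFR : FormallyRealFour A)
    (I₀ M₀ : Quaternion ℝ) (hI₀ : IsImaginaryUnit I₀) (hM₀ : IsImaginaryUnit M₀)
    (hind : LinearIndependent ℝ ![I₀, M₀])
    (a b : ℝ) (J₀ K₀ : Quaternion ℝ)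
    (ha : a = I₀.imI * M₀.imI + I₀.imJ * M₀.imJ + I₀.imK * M₀.imK)
    (hb : b = Real.sqrt (1 - a ^ 2))
    (hK₀ : K₀ = (2 * b)⁻¹ • (I₀ * M₀ - M₀ * I₀))
    (hJ₀ : J₀ = K₀ * I₀)
    (f h : Quaternion A)
    (hfh : IsSliced I₀ (f * h))
    (hhf : IsSliced M₀ (h * f)) (hhf' : ¬ IsScalarQ (h * f)) :
    ∃ ε : ℝ, (ε = 1 ∨ ε = -1) ∧
      ∃ ft ht : Quaternion A, IsSliced I₀ ft ∧ ft ≠ 0 ∧ IsSliced I₀ ht ∧ ht ≠ 0 ∧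
        f = ft * (1 + ((a + ε) / b) • qmap K₀) ∧
        h = (1 - ((a + ε) / b) • qmap K₀) * ht := by
  obtain ⟨hb0, hab, hI, hJ, hIJ, hK, hM⟩ :=
    orthonormal_frame_relations hI₀ hM₀ hind ha hb hK₀ hJ₀
  have hP0 : (qmap I₀ : ℍ[A]).re = 0 := by simp [hI₀.1]
  have hP : (qmap I₀ * qmap I₀ : ℍ[A]) = -1 := by
    rw [← qmap_mul, hI, ← qmapAlgHom_apply, map_neg, map_one]
  have hQ : (qmap J₀ * qmap J₀ : ℍ[A]) = -1 := by
    rw [← qmap_mul, hJ, ← qmapAlgHom_apply, map_neg, map_one]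
  have hPQ : (qmap I₀ * qmap J₀ : ℍ[A]) = -(qmap J₀ * qmap I₀) := by
    rw [← qmap_mul, ← qmap_mul, hIJ, ← qmapAlgHom_apply, map_neg, qmapAlgHom_apply]
  obtain ⟨ε, hε, x, u, hx, hu, rfl, rfl⟩ := exists_factorization_of_sliced_products hFR hP0 hP hQ
    hPQ hb0 hab hfh (by simpa only [IsSliced, hM, ← qmapAlgHom_apply, map_add, map_smul] using hhf)
    hhf'
  have hφ := sliceHom_injective hP0 hP
  refine ⟨ε, hε, _, _, ⟨x.re, x.im, sliceHom_apply hP x⟩, (map_ne_zero_iff _ hφ).mpr hx,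
    ⟨u.re, u.im, sliceHom_apply hP u⟩, (map_ne_zero_iff _ hφ).mpr hu, ?_, ?_⟩ <;>
    rw [hK, qmap_mul]

theorem two_sided_products_sliced_case_distinct_slices
    {A : Type*} [CommRing A] [IsDomain A] [Algebra ℝ A] (hFR : FormallyRealFour A)
    (I₀ M₀ : Quaternion ℝ) (hI₀ : IsImaginaryUnit I₀) (hM₀ : IsImaginaryUnit M₀)
    (hind : LinearIndependent ℝ ![I₀, M₀])
    (a b : ℝ) (J₀ K₀ : Quaternion ℝ)
    (ha : a = I₀.imI * M₀.imI + I₀.imJ * M₀.imJ + I₀.imK * M₀.imK)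
    (hb : b = Real.sqrt (1 - a ^ 2))
    (hK₀ : K₀ = (2 * b)⁻¹ • (I₀ * M₀ - M₀ * I₀))
    (hJ₀ : J₀ = K₀ * I₀)
    (f h : Quaternion A) (hf : f ≠ 0) (hh : h ≠ 0)
    (hfh : IsSliced I₀ (f * h)) (hfh' : ¬ IsScalarQ (f * h))
    (hhf : IsSliced M₀ (h * f)) (hhf' : ¬ IsScalarQ (h * f)) :
    ∃ ε : ℝ, (ε = 1 ∨ ε = -1) ∧
      ∃ ft ht : Quaternion A, IsSliced I₀ ft ∧ ft ≠ 0 ∧ IsSliced I₀ ht ∧ ht ≠ 0 ∧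
        f = ft * (1 + ((a + ε) / b) • qmap K₀) ∧
        h = (1 - ((a + ε) / b) • qmap K₀) * ht :=
  two_sided_products_sliced_case_distinct_slices_general hFR I₀ M₀ hI₀ hM₀ hind a b J₀ K₀ ha hb hK₀
    hJ₀ f h hfh hhf hhf'
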